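/- In the standard monster chart with inverted positions IP ⊆ {1,...,k} and vector fields f_j defined recursively as above, for 1 ≤ i < j ≤ k: [f_i, f_j] = -b_{ij} f_{i-1} if i ∈ IP and [f_i, f_j] = -b_{ij} v_{i-1} if i ∉ IP, where b_{ij} = a_{i+1,j} if i+1 ∈ IP and b_{ij} = n_{i+1} a_{i+1,j} otherwise. -/

import Mathlib

/-- Polynomial functions on the standard chart `U × 𝔸^k`, with variable `0`
the coordinate `r₀` and variable `i+1` the coordinate `nᵢ`. -/
abbrev MPoly : Type := MvPolynomial ℕ ℚ

/-- A polynomial vector field, recorded by its (finitely many nonzero)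
components with respect to the basis `∂/∂r₀, ∂/∂n₀, ∂/∂n₁, …`. -/
abbrev VField : Type := ℕ →₀ MPoly

/-- The coordinate function `nᵢ`. -/
noncomputable def nvar (i : ℕ) : MPoly := MvPolynomial.X (i + 1)

/-- The Lie derivative `X(q)` of a function by a vector field. -/
noncomputable def vfApply (X : VField) (q : MPoly) : MPoly :=
  X.sum fun d p => p * MvPolynomial.pderiv d q

/-- The Lie bracket `[X,Y]` of two polynomial vector fields. -/
noncomputable def bracket (X Y : VField) : VField :=
  (X.sum fun d p => Y.sum fun c q => Finsupp.single c (p * MvPolynomial.pderiv d q)) -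
  (Y.sum fun d p => X.sum fun c q => Finsupp.single c (p * MvPolynomial.pderiv d q))

/-- The standard vertical vector field `vᵢ = ∂/∂nᵢ`. -/
noncomputable def vvf (i : ℕ) : VField := Finsupp.single (i + 1) 1

/-- The standard focal vector fields: `f₀ = ∂/∂r₀`, and
`fᵢ = nᵢ·fᵢ₋₁ + vᵢ₋₁` if `i ∈ IP` (inverted choice),
`fᵢ = fᵢ₋₁ + nᵢ·vᵢ₋₁` if `i ∉ IP` (ordinary choice). -/
noncomputable def fvf (IP : Finset ℕ) : ℕ → VField
  | 0 => Finsupp.single 0 1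
  | (i + 1) =>
      if i + 1 ∈ IP then nvar (i + 1) • fvf IP i + vvf i
      else fvf IP i + nvar (i + 1) • vvf i

/-- `a_{ij} = Π_{h ∈ IP, i+1 ≤ h ≤ j} n_h`. -/
noncomputable def apoly (IP : Finset ℕ) (i j : ℕ) : MPoly :=
  ∏ h ∈ (Finset.Icc (i + 1) j).filter (fun h => h ∈ IP), nvar h

/-- `b_{ij} = a_{i+1,j}` if `i+1 ∈ IP`, and `b_{ij} = n_{i+1}·a_{i+1,j}` otherwise. -/
noncomputable def bpoly (IP : Finset ℕ) (i j : ℕ) : MPoly :=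
  if i + 1 ∈ IP then apoly IP (i + 1) j else nvar (i + 1) * apoly IP (i + 1) j

/-!
By the Leibniz rule `[p • X, Y] = p • [X, Y] - Y(p) • X`, expanding `f_{i+1}` through its
recursion gives `[f_{i+1}, f_j] = -f_j(n_{i+1}) • g_{i+1}` plus `n_{i+1}[fᵢ, f_j] + [vᵢ, f_j]`
(resp. `[fᵢ, f_j] + n_{i+1}[vᵢ, f_j]`), and `f_j(n_{i+1}) = b_{i+1,j}`. Inductively
`[fᵢ, f_j] = -b_{ij} • gᵢ` and `[vᵢ, f_j] = a_{ij} • gᵢ` (both brackets vanish for `i = 0`, as the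
coefficients of `f_j` do not involve `r₀, n₀`), and `a_{ij} = n_{i+1} b_{ij}` resp.
`b_{ij} = n_{i+1} a_{ij}` makes the extra combination vanish.
-/

open MvPolynomial

section VectorFields

lemma vfApply_C (X : VField) (c : ℚ) : vfApply X (C c) = 0 := by
  simp [vfApply]

lemma vfApply_X (X : VField) (m : ℕ) : vfApply X (MvPolynomial.X m) = X m := by
  rw [vfApply, Finsupp.sum_eq_single m] <;> simp_all [pderiv_X]

lemma vfApply_add (X : VField) (p q : MPoly) :
    vfApply X (p + q) = vfApply X p + vfApply X q := by
  simp only [vfApply, map_add, mul_add, Finsupp.sum_add]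

lemma vfApply_mul (X : VField) (p q : MPoly) :
    vfApply X (p * q) = p * vfApply X q + q * vfApply X p := by
  simp only [vfApply, Finsupp.mul_sum, ← Finsupp.sum_add, Derivation.leibniz, smul_eq_mul]
  exact Finsupp.sum_congr fun _ _ => by ring

lemma vfApply_add_left (X Y : VField) (q : MPoly) :
    vfApply (X + Y) q = vfApply X q + vfApply Y q :=
  Finsupp.sum_add_index' (fun _ => zero_mul _) fun _ _ _ => add_mul _ _ _

lemma vfApply_smul_left (p : MPoly) (X : VField) (q : MPoly) :
    vfApply (p • X) q = p * vfApply X q := by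
  rw [vfApply, vfApply, Finsupp.sum_smul_index' fun _ => zero_mul _, Finsupp.mul_sum]
  exact Finsupp.sum_congr fun _ _ => by rw [smul_eq_mul, mul_assoc]

lemma vfApply_single_one (a : ℕ) (q : MPoly) : vfApply (Finsupp.single a 1) q = pderiv a q := by
  rw [vfApply, Finsupp.sum_single_index] <;> simp

lemma bracket_apply (X Y : VField) (m : ℕ) :
    bracket X Y m = vfApply X (Y m) - vfApply Y (X m) := by
  have key (X Y : VField) : (X.sum fun d p => Y.sum fun c q =>
      Finsupp.single c (p * pderiv d q)) m = vfApply X (Y m) := by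
    rw [Finsupp.sum_apply]
    refine Finsupp.sum_congr fun d _ => ?_
    rw [Finsupp.sum_apply, Finsupp.sum_eq_single m] <;> simp +contextual
  rw [bracket, Finsupp.sub_apply, key, key]

lemma bracket_add_left (X Y Z : VField) : bracket (X + Y) Z = bracket X Z + bracket Y Z := by
  ext m : 1
  simp only [bracket_apply, Finsupp.add_apply, vfApply_add, vfApply_add_left]
  ring

lemma bracket_add_right (X Y Z : VField) : bracket X (Y + Z) = bracket X Y + bracket X Z := by
  ext m : 1
  simp only [bracket_apply, Finsupp.add_apply, vfApply_add, vfApply_add_left]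
  ring

lemma bracket_smul_left (p : MPoly) (X Y : VField) :
    bracket (p • X) Y = p • bracket X Y - vfApply Y p • X := by
  ext m : 1
  simp only [bracket_apply, Finsupp.sub_apply, Finsupp.smul_apply, smul_eq_mul, vfApply_mul,
    vfApply_smul_left]
  ring

lemma bracket_smul_right (p : MPoly) (X Y : VField) :
    bracket X (p • Y) = p • bracket X Y + vfApply X p • Y := by
  ext m : 1
  simp only [bracket_apply, Finsupp.add_apply, Finsupp.smul_apply, smul_eq_mul, vfApply_mul,
    vfApply_smul_left]
  ring

lemma bracket_single_one_left_apply (a : ℕ) (Y : VField) (m : ℕ) :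
    bracket (Finsupp.single a 1) Y m = pderiv a (Y m) := by
  rw [bracket_apply, vfApply_single_one, Finsupp.single_apply]
  split_ifs
  · rw [← C_1, vfApply_C, sub_zero]
  · rw [← C_0, vfApply_C, sub_zero]

lemma bracket_single_one_left_eq_zero {a : ℕ} {Y : VField} (hY : ∀ m, pderiv a (Y m) = 0) :
    bracket (Finsupp.single a 1) Y = 0 :=
  Finsupp.ext fun m => (bracket_single_one_left_apply a Y m).trans (hY m)

end VectorFields

lemma vfApply_vvf_nvar (i m : ℕ) : vfApply (vvf i) (nvar m) = if i = m then 1 else 0 := by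
  simp [vvf, nvar, vfApply_single_one, pderiv_X, Pi.single_apply, eq_comm]

lemma bracket_vvf_vvf (i j : ℕ) : bracket (vvf i) (vvf j) = 0 :=
  bracket_single_one_left_eq_zero fun m => by
    rw [vvf, Finsupp.single_apply]; split_ifs <;> simp

/-- The field `gᵢ` (`fᵢ₋₁` or `vᵢ₋₁`) of which `[vᵢ, f_j]` and `[fᵢ, f_j]` are multiples. -/
noncomputable def gvf (IP : Finset ℕ) (i : ℕ) : VField :=
  if i ∈ IP then fvf IP (i - 1) else vvf (i - 1)

section FocalFields

variable (IP : Finset ℕ)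

lemma fvf_succ_of_mem {i : ℕ} (h : i + 1 ∈ IP) :
    fvf IP (i + 1) = nvar (i + 1) • fvf IP i + vvf i := by
  rw [fvf, if_pos h]

lemma fvf_succ_of_notMem {i : ℕ} (h : i + 1 ∉ IP) :
    fvf IP (i + 1) = fvf IP i + nvar (i + 1) • vvf i := by
  rw [fvf, if_neg h]

lemma fvf_apply_of_lt {m c : ℕ} (h : m < c) : fvf IP m c = 0 := by
  induction m generalizing c with
  | zero => simp [fvf, h.ne]
  | succ n ih =>
    rw [fvf]
    split_ifs <;> simp [vvf, ih (n.lt_succ_self.trans h), h.ne]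

/-- The coefficients of `fₘ` are polynomials in `n₁, …, nₘ` only. -/
lemma pderiv_fvf_apply {m d : ℕ} (hd : d < 2 ∨ m + 1 < d) (c : ℕ) :
    pderiv d (fvf IP m c) = 0 := by
  induction m generalizing c with
  | zero => simp [fvf, Finsupp.single_apply, apply_ite (pderiv d)]
  | succ n ih =>
    have hn : pderiv d (nvar (n + 1)) = 0 := by
      rw [nvar, pderiv_X, Pi.single_apply, if_neg (by omega)]
    rw [fvf]
    split_ifs <;>
      simp [vvf, Finsupp.single_apply, apply_ite (pderiv d), hn, ih (by omega)]

lemma bracket_fvf_zero_fvf (j : ℕ) : bracket (fvf IP 0) (fvf IP j) = 0 :=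
  bracket_single_one_left_eq_zero (pderiv_fvf_apply IP (by omega))

lemma bracket_vvf_zero_fvf (j : ℕ) : bracket (vvf 0) (fvf IP j) = 0 :=
  bracket_single_one_left_eq_zero (pderiv_fvf_apply IP (by omega))

lemma bracket_vvf_fvf_of_lt {i m : ℕ} (h : m < i) : bracket (vvf i) (fvf IP m) = 0 :=
  bracket_single_one_left_eq_zero (pderiv_fvf_apply IP (by omega))

lemma apoly_self (i : ℕ) : apoly IP i i = 1 := by
  simp [apoly]

lemma apoly_succ_right {i j : ℕ} (h : i ≤ j) :
    apoly IP i (j + 1) = if j + 1 ∈ IP then nvar (j + 1) * apoly IP i j else apoly IP i j := by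
  rw [apoly, ← Finset.insert_Icc_right_eq_Icc_add_one (by omega), Finset.filter_insert]
  split_ifs
  · exact Finset.prod_insert (by simp)
  · rfl

lemma apoly_eq_succ_left {i j : ℕ} (h : i < j) :
    apoly IP i j =
      if i + 1 ∈ IP then nvar (i + 1) * apoly IP (i + 1) j else apoly IP (i + 1) j := by
  rw [apoly, ← Finset.insert_Icc_add_one_left_eq_Icc (by omega), Finset.filter_insert]
  split_ifs
  · exact Finset.prod_insert (by simp)
  · rfl

lemma bpoly_succ_right {i j : ℕ} (h : i < j) :
    bpoly IP i (j + 1) = if j + 1 ∈ IP then nvar (j + 1) * bpoly IP i j else bpoly IP i j := by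
  rw [bpoly, bpoly, apoly_succ_right IP h]
  split_ifs <;> ring

lemma vfApply_fvf_nvar {i j : ℕ} (h : i < j) : vfApply (fvf IP j) (nvar i) = bpoly IP i j := by
  rw [nvar, vfApply_X]
  induction j, h using Nat.le_induction with
  | base =>
    have hf := fvf_apply_of_lt IP (Nat.lt_succ_self i)
    rw [bpoly, apoly_self]
    split_ifs with hi <;> simp [fvf, hi, vvf, hf]
  | succ j hij ih =>
    rw [bpoly_succ_right IP hij]
    split_ifs with hj <;> simp [fvf, hj, vvf, ih, (Nat.succ_le_iff.mp hij).ne']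

lemma bracket_vvf_fvf {i j : ℕ} (hi : 1 ≤ i) (hij : i ≤ j) :
    bracket (vvf i) (fvf IP j) = apoly IP i j • gvf IP i := by
  induction j, hij using Nat.le_induction with
  | base =>
    obtain ⟨m, rfl⟩ : ∃ m, i = m + 1 := ⟨i - 1, by omega⟩
    have hf := bracket_vvf_fvf_of_lt IP (Nat.lt_succ_self m)
    by_cases hm : m + 1 ∈ IP <;>
      simp [fvf, gvf, hm, apoly_self, bracket_add_right, bracket_smul_right, hf, bracket_vvf_vvf,
        vfApply_vvf_nvar]
  | succ j hij ih =>
    have hv : vfApply (vvf i) (nvar (j + 1)) = 0 := by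
      rw [vfApply_vvf_nvar, if_neg (by omega)]
    by_cases hj : j + 1 ∈ IP <;>
      simp [fvf, hj, apoly_succ_right IP hij, bracket_add_right, bracket_smul_right, ih,
        bracket_vvf_vvf, hv, smul_smul]

lemma bracket_fvf_succ_fvf_of_bracket_eq_smul {i j : ℕ} (hij : i + 1 < j) (Z : VField)
    (hf : bracket (fvf IP i) (fvf IP j) = -bpoly IP i j • Z)
    (hv : bracket (vvf i) (fvf IP j) = apoly IP i j • Z) :
    bracket (fvf IP (i + 1)) (fvf IP j) = -bpoly IP (i + 1) j • gvf IP (i + 1) := by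
  have ha := apoly_eq_succ_left IP (i.lt_succ_self.trans hij)
  have hb : bpoly IP i j =
      if i + 1 ∈ IP then apoly IP (i + 1) j else nvar (i + 1) * apoly IP (i + 1) j := rfl
  rw [gvf, Nat.add_sub_cancel]
  by_cases h : i + 1 ∈ IP
  · rw [if_pos h] at ha hb ⊢
    rw [fvf_succ_of_mem IP h, bracket_add_left, bracket_smul_left, hf, hv, ha, hb,
      vfApply_fvf_nvar IP hij]
    module
  · rw [if_neg h] at ha hb ⊢
    rw [fvf_succ_of_notMem IP h, bracket_add_left, bracket_smul_left, hf, hv, ha, hb,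
      vfApply_fvf_nvar IP hij]
    module

lemma bracket_fvf_succ_fvf_eq_smul_gvf {m j : ℕ} (h : m + 1 < j) :
    bracket (fvf IP (m + 1)) (fvf IP j) = -bpoly IP (m + 1) j • gvf IP (m + 1) := by
  induction m with
  | zero =>
    exact bracket_fvf_succ_fvf_of_bracket_eq_smul IP h 0 (by simp [bracket_fvf_zero_fvf])
      (by simp [bracket_vvf_zero_fvf])
  | succ m ih =>
    exact bracket_fvf_succ_fvf_of_bracket_eq_smul IP h (gvf IP (m + 1)) (ih (by omega))
      (bracket_vvf_fvf IP (by omega) (by omega))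

end FocalFields

theorem bracket_fvf_fvf_general (IP : Finset ℕ)
    (i j : ℕ) (hi1 : 1 ≤ i) (hij : i < j) :
    bracket (fvf IP i) (fvf IP j) =
      if i ∈ IP then (-bpoly IP i j) • fvf IP (i - 1)
      else (-bpoly IP i j) • vvf (i - 1) := by
  obtain ⟨m, rfl⟩ : ∃ m, i = m + 1 := ⟨i - 1, by omega⟩
  rw [bracket_fvf_succ_fvf_eq_smul_gvf IP hij, gvf, smul_ite]

/-- for `1 ≤ i < j ≤ k`:
`[fᵢ, f_j] = -b_{ij}·fᵢ₋₁` if `i ∈ IP` and `[fᵢ, f_j] = -b_{ij}·vᵢ₋₁` if `i ∉ IP`. -/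
theorem bracket_fvf_fvf (k : ℕ) (IP : Finset ℕ) (hIP : IP ⊆ Finset.Icc 1 k)
    (i j : ℕ) (hi1 : 1 ≤ i) (hij : i < j) (hjk : j ≤ k) :
    bracket (fvf IP i) (fvf IP j) =
      if i ∈ IP then (-bpoly IP i j) • fvf IP (i - 1)
      else (-bpoly IP i j) • vvf (i - 1) :=
  bracket_fvf_fvf_general IP i j hi1 hij
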